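/- arXiv:1707.07536 — 3 statements merged into one kernel-verified Lean document; each statement's English description precedes it below -/
import Mathlib

section
/- Let a = (a_i) ∈ c₀ over a complete non-archimedean valued field K. The multiplication operator M_a : c₀ → c₀, M_a(x) = (a_i x_i)_{i∈ℕ}, is a continuous linear operator with ‖M_a‖ = ‖a‖_∞, it admits an adjoint (equal to itself), and lim_{n→∞} ‖M_a e_n‖_∞ = 0; consequently M_a is a compact operator. -/
/-!
`M_a` is left multiplication by `a` in the non-unital Banach algebra `c₀`, so `‖M_a‖ ≤ ‖a‖`,
and `M_a eᵢ = aᵢ eᵢ` gives the reverse inequality. Cutting `a` off after `N` terms yields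
multiplication operators of finite rank (their ranges consist of sequences vanishing from `N`
on, a copy of `K^N`) within `sup_{i ≥ N} ‖aᵢ‖` of `M_a`, which tends to `0` as `a ∈ c₀`.
-/

open Filter Topology

noncomputable section

/-- `c₀(ℕ, K)`: the space of `K`-valued null sequences (zero-at-infinity functions on
discrete `ℕ`), with the supremum norm. -/
abbrev Cz (K : Type) [NontriviallyNormedField K] := ZeroAtInftyContinuousMap ℕ K

/-- The canonical bilinear form `⟨x, y⟩ = ∑ᵢ xᵢ yᵢ` on `c₀`. -/
def pr {K : Type} [NontriviallyNormedField K] (x y : Cz K) : K := ∑' i, x i * y i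

/-- The canonical basis vector `eᵢ` of `c₀`. -/
def e (K : Type) [NontriviallyNormedField K] (i : ℕ) : Cz K where
  toFun := fun j => if j = i then (1 : K) else 0
  continuous_toFun := continuous_of_discreteTopology
  zero_at_infty' := by
    rw [cocompact_eq_atTop]
    apply tendsto_nhds_of_eventually_eq
    filter_upwards [eventually_gt_atTop i] with j hj
    simp [hj.ne']

/-- A continuous linear operator on `c₀` is compact iff it is a uniform limit of
finite-rank continuous operators (equivalently, it maps the unit ball to a compactoid). -/
def IsCompactOp {K : Type} [NontriviallyNormedField K] (T : Cz K →L[K] Cz K) : Prop :=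
  ∀ ε : ℝ, 0 < ε → ∃ S : Cz K →L[K] Cz K,
    Module.Finite K (LinearMap.range (S : Cz K →ₗ[K] Cz K)) ∧ ‖T - S‖ ≤ ε

/-- The closed unit ball of a non-archimedean valued field, as a subring
(the valuation ring). -/
def valRing {K : Type} [NontriviallyNormedField K]
    (hna : IsNonarchimedean (norm : K → ℝ)) : Subring K where
  carrier := {x : K | ‖x‖ ≤ 1}
  mul_mem' := fun {a b} ha hb => by
    simp only [Set.mem_setOf_eq] at *
    rw [norm_mul]
    nlinarith [norm_nonneg a, norm_nonneg b]
  one_mem' := by simp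
  add_mem' := fun {a b} ha hb => by
    simp only [Set.mem_setOf_eq] at *
    exact (hna a b).trans (max_le ha hb)
  zero_mem' := by simp
  neg_mem' := fun {a} ha => by simpa using ha

/-- The maximal ideal (open unit ball) of the valuation ring. -/
def valIdeal {K : Type} [NontriviallyNormedField K]
    (hna : IsNonarchimedean (norm : K → ℝ)) : Ideal (valRing hna) where
  carrier := {x | ‖(x : K)‖ < 1}
  add_mem' := fun {a b} ha hb => by
    simp only [Set.mem_setOf_eq] at *
    push_cast
    exact ((hna a b)).trans_lt (max_lt ha hb)
  zero_mem' := by simp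
  smul_mem' := fun c x hx => by
    simp only [Set.mem_setOf_eq, smul_eq_mul] at *
    push_cast
    rw [norm_mul]
    calc ‖(c : K)‖ * ‖(x : K)‖ ≤ 1 * ‖(x : K)‖ := by
          exact mul_le_mul_of_nonneg_right c.2 (norm_nonneg _)
      _ = ‖(x : K)‖ := one_mul _
      _ < 1 := hx

/-- The residue class field of a non-archimedean valued field. -/
abbrev Residue {K : Type} [NontriviallyNormedField K]
    (hna : IsNonarchimedean (norm : K → ℝ)) : Type :=
  valRing hna ⧸ valIdeal hna

/-- A commutative ring is formally real if `-1` is not a sum of squares. -/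
def FormallyRealRing (R : Type) [CommRing R] : Prop :=
  ¬ ∃ (n : ℕ) (a : Fin n → R), (∑ i, a i ^ 2) = -1

namespace Cz

variable {K : Type} [NontriviallyNormedField K]

open ContinuousLinearMap (mul mul_apply')

lemma norm_le_iff {f : Cz K} {C : ℝ} (hC : 0 ≤ C) : ‖f‖ ≤ C ↔ ∀ i, ‖f i‖ ≤ C := by
  rw [← ZeroAtInftyContinuousMap.norm_toBCF_eq_norm]
  exact BoundedContinuousFunction.norm_le hC

lemma norm_apply_le (f : Cz K) (i : ℕ) : ‖f i‖ ≤ ‖f‖ :=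
  (norm_le_iff (norm_nonneg f)).1 le_rfl i

lemma tendsto_apply_atTop (f : Cz K) : Tendsto f atTop (𝓝 0) := by
  simpa [cocompact_eq_atTop] using f.zero_at_infty'

lemma e_apply (i j : ℕ) : e K i j = if j = i then 1 else 0 := rfl

lemma norm_e (i : ℕ) : ‖e K i‖ = 1 := by
  refine le_antisymm ((norm_le_iff zero_le_one).2 fun j => ?_) ?_
  · by_cases h : j = i <;> simp [e_apply, h]
  · simpa [e_apply] using norm_apply_le (e K i) i

lemma mul_e (b : Cz K) (i : ℕ) : b * e K i = b i • e K i := by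
  ext j
  by_cases h : j = i <;> simp [e_apply, h]

lemma norm_mul_e (b : Cz K) (i : ℕ) : ‖b * e K i‖ = ‖b i‖ := by
  rw [mul_e, norm_smul, norm_e, mul_one]

lemma eq_mul_of_apply_eq_mul {b : Cz K} {M : Cz K →L[K] Cz K}
    (hM : ∀ (x : Cz K) (i : ℕ), M x i = b i * x i) : M = mul K (Cz K) b := by
  ext x i
  exact hM x i

lemma opNorm_mul_apply (b : Cz K) : ‖mul K (Cz K) b‖ = ‖b‖ := by
  refine le_antisymm (ContinuousLinearMap.opNorm_mul_apply_le K _ b)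
    ((norm_le_iff (norm_nonneg _)).2 fun i => ?_)
  calc ‖b i‖ = ‖mul K (Cz K) b (e K i)‖ := by rw [mul_apply', norm_mul_e]
    _ ≤ ‖mul K (Cz K) b‖ * ‖e K i‖ := ContinuousLinearMap.le_opNorm _ _
    _ = ‖mul K (Cz K) b‖ := by rw [norm_e, mul_one]

lemma pr_mul_left (b x z : Cz K) : pr (b * x) z = pr x (b * z) := by
  unfold pr
  congr 1 with i
  simp only [ZeroAtInftyContinuousMap.mul_apply]
  ring

def trunc (b : Cz K) (N : ℕ) : Cz K where
  toFun i := if i < N then b i else 0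
  continuous_toFun := continuous_of_discreteTopology
  zero_at_infty' := by
    rw [cocompact_eq_atTop]
    refine tendsto_nhds_of_eventually_eq ?_
    filter_upwards [eventually_ge_atTop N] with j hj
    simp [not_lt.2 hj]

lemma trunc_apply (b : Cz K) (N i : ℕ) : trunc b N i = if i < N then b i else 0 := rfl

lemma norm_sub_trunc_le {b : Cz K} {N : ℕ} {ε : ℝ} (hε : 0 ≤ ε)
    (h : ∀ i, N ≤ i → ‖b i‖ ≤ ε) : ‖b - trunc b N‖ ≤ ε := by
  refine (norm_le_iff hε).2 fun i => ?_
  by_cases hi : i < N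
  · simpa [trunc_apply, hi] using hε
  · simpa [trunc_apply, hi] using h i (not_lt.1 hi)

variable (K) in
def supportedBelow (N : ℕ) : Submodule K (Cz K) where
  carrier := {f | ∀ i, N ≤ i → f i = 0}
  add_mem' hf hg i hi := by simp [hf i hi, hg i hi]
  zero_mem' _ _ := rfl
  smul_mem' c f hf i hi := by simp [hf i hi]

instance (N : ℕ) : FiniteDimensional K (supportedBelow K N) := by
  let restrict : supportedBelow K N →ₗ[K] (Fin N → K) :=
    { toFun f i := (f : Cz K) i
      map_add' _ _ := rfl
      map_smul' _ _ := rfl }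
  refine Module.Finite.of_injective restrict fun f g hfg => ?_
  ext i
  by_cases hi : i < N
  · exact congr_fun hfg ⟨i, hi⟩
  · rw [f.2 i (not_lt.1 hi), g.2 i (not_lt.1 hi)]

lemma range_mul_trunc_le (b : Cz K) (N : ℕ) :
    LinearMap.range (mul K (Cz K) (trunc b N) : Cz K →ₗ[K] Cz K) ≤ supportedBelow K N := by
  rintro _ ⟨x, rfl⟩ i hi
  simp [trunc_apply, not_lt.2 hi]

lemma isCompactOp_mul (b : Cz K) : IsCompactOp (mul K (Cz K) b) := by
  intro ε hε
  obtain ⟨N, hN⟩ := eventually_atTop.1 <|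
    (tendsto_apply_atTop b).norm.eventually (ge_mem_nhds (by simpa using hε))
  refine ⟨mul K (Cz K) (trunc b N),
    Submodule.finiteDimensional_of_le (range_mul_trunc_le b N), ?_⟩
  rw [← (mul K (Cz K)).map_sub]
  exact (ContinuousLinearMap.opNorm_mul_apply_le K _ _).trans (norm_sub_trunc_le hε.le hN)

end Cz

theorem stmt4_general {K : Type} [NontriviallyNormedField K]
    (a : Cz K) :
    (∃ M : Cz K →L[K] Cz K, ∀ (x : Cz K) (i : ℕ), M x i = a i * x i) ∧
    (∀ M : Cz K →L[K] Cz K, (∀ (x : Cz K) (i : ℕ), M x i = a i * x i) →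
      ‖M‖ = ‖a‖ ∧ (∀ x z : Cz K, pr (M x) z = pr x (M z)) ∧
      Tendsto (fun n => ‖M (e K n)‖) atTop (𝓝 (0 : ℝ)) ∧ IsCompactOp M) := by
  refine ⟨⟨ContinuousLinearMap.mul K (Cz K) a, fun x i => rfl⟩, fun M hM => ?_⟩
  obtain rfl := Cz.eq_mul_of_apply_eq_mul hM
  refine ⟨Cz.opNorm_mul_apply a, Cz.pr_mul_left a, ?_, Cz.isCompactOp_mul a⟩
  simp_rw [ContinuousLinearMap.mul_apply', Cz.norm_mul_e]
  simpa using (Cz.tendsto_apply_atTop a).norm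

theorem stmt4 {K : Type} [NontriviallyNormedField K] [CompleteSpace K]
    (hna : IsNonarchimedean (norm : K → ℝ))
    (a : Cz K) :
    (∃ M : Cz K →L[K] Cz K, ∀ (x : Cz K) (i : ℕ), M x i = a i * x i) ∧
    (∀ M : Cz K →L[K] Cz K, (∀ (x : Cz K) (i : ℕ), M x i = a i * x i) →
      ‖M‖ = ‖a‖ ∧ (∀ x z : Cz K, pr (M x) z = pr x (M z)) ∧
      Tendsto (fun n => ‖M (e K n)‖) atTop (𝓝 (0 : ℝ)) ∧ IsCompactOp M) :=
  stmt4_general a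
end
end

section
/- Let α ∈ K and λ ∈ c₀, and let T_λ = Σ λ_i P_i be compact. Then the operator norm of α·Id + T_λ on c₀ equals max{|α|, ‖T_λ‖}. -/
/-!
Over a non-archimedean field the sup norm of `c₀` is ultrametric, hence so is the operator
norm, which gives `‖α + T‖ ≤ max ‖α‖ ‖T‖`. For the converse, `T eₙ → 0`: each `P i eₙ` is the
`n`-th coordinate of the null sequence `y i` times a fixed vector, and this property passes to
finite sums and then to their operator-norm limit `T`. So for large `n` we have
`‖T eₙ‖ < ‖α‖`, and the isosceles property gives `‖(α + T) eₙ‖ = ‖α‖`; thus `‖α‖ ≤ ‖α + T‖`, and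
then `‖T‖ ≤ max ‖α + T‖ ‖α‖ = ‖α + T‖`.
-/

open Filter Topology

noncomputable section

instance BoundedContinuousFunction.isUltrametricDist {α β : Type*} [TopologicalSpace α]
    [PseudoMetricSpace β] [IsUltrametricDist β] :
    IsUltrametricDist (BoundedContinuousFunction α β) where
  dist_triangle_max f g h := (dist_le (by positivity)).mpr fun x =>
    (dist_triangle_max (f x) (g x) (h x)).trans
      (max_le_max (dist_coe_le_dist x) (dist_coe_le_dist x))

instance ZeroAtInftyContinuousMap.isUltrametricDist {α β : Type*} [TopologicalSpace α]
    [PseudoMetricSpace β] [Zero β] [IsUltrametricDist β] :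
    IsUltrametricDist (ZeroAtInftyContinuousMap α β) where
  dist_triangle_max f g h := by
    simpa only [← dist_toBCF_eq_dist] using dist_triangle_max f.toBCF g.toBCF h.toBCF

section OperatorNorm

variable {𝕜 E F : Type*} [NontriviallyNormedField 𝕜] [SeminormedAddCommGroup E]
  [SeminormedAddCommGroup F] [NormedSpace 𝕜 E] [NormedSpace 𝕜 F]

instance ContinuousLinearMap.isUltrametricDist [IsUltrametricDist F] :
    IsUltrametricDist (E →L[𝕜] F) :=
  IsUltrametricDist.isUltrametricDist_of_forall_norm_add_le_max_norm fun A B =>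
    ContinuousLinearMap.opNorm_le_bound _ (by positivity) fun x =>
      calc ‖A x + B x‖ ≤ max ‖A x‖ ‖B x‖ := IsUltrametricDist.norm_add_le_max _ _
        _ ≤ max (‖A‖ * ‖x‖) (‖B‖ * ‖x‖) := max_le_max (A.le_opNorm x) (B.le_opNorm x)
        _ = max ‖A‖ ‖B‖ * ‖x‖ := (max_mul_of_nonneg _ _ (norm_nonneg x)).symm

theorem ContinuousLinearMap.tendsto_apply_of_tendsto {ι : Type*} {l : Filter ι} [l.NeBot]
    {A : ι → E →L[𝕜] F} {T : E →L[𝕜] F} (hA : Tendsto A l (𝓝 T)) {v : ℕ → E} {C : ℝ}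
    (hv : ∀ n, ‖v n‖ ≤ C) (h : ∀ k, Tendsto (fun n => A k (v n)) atTop (𝓝 0)) :
    Tendsto (fun n => T (v n)) atTop (𝓝 0) := by
  refine TendstoUniformly.tendsto_of_eventually_tendsto (F := fun k n => A k (v n)) (p := l)
    ?_ (.of_forall h) tendsto_const_nhds
  have hC : 0 < max C 1 := lt_max_of_lt_right one_pos
  refine Metric.tendstoUniformly_iff.mpr fun ε hε => ?_
  filter_upwards [(tendsto_iff_norm_sub_tendsto_zero.mp hA).eventually
    (gt_mem_nhds (div_pos hε hC))] with k hk n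
  calc dist (T (v n)) (A k (v n)) = ‖(A k - T) (v n)‖ := dist_eq_norm' _ _
    _ ≤ ‖A k - T‖ * max C 1 :=
      (le_opNorm _ _).trans (by gcongr; exact (hv n).trans (le_max_left C 1))
    _ < ε := (lt_div_iff₀ hC).mp hk

variable [IsUltrametricDist E]

theorem ContinuousLinearMap.norm_le_norm_smul_one_add {T : E →L[𝕜] E} {α : 𝕜} {v : E}
    (hv : ‖v‖ = 1) (hTv : ‖T v‖ < ‖α‖) : ‖α‖ ≤ ‖α • 1 + T‖ := by
  have hαv : ‖α • v‖ = ‖α‖ := by rw [norm_smul, hv, mul_one]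
  calc ‖α‖ = ‖α • v + T v‖ := by
        rw [IsUltrametricDist.norm_add_eq_max_of_norm_ne_norm (by rw [hαv]; exact hTv.ne'), hαv,
          max_eq_left hTv.le]
    _ = ‖(α • 1 + T) v‖ := rfl
    _ ≤ ‖α • 1 + T‖ := by simpa [hv] using (α • 1 + T).le_opNorm v

theorem ContinuousLinearMap.norm_smul_one_add_eq_max {T : E →L[𝕜] E} {v : ℕ → E}
    (hv : ∀ n, ‖v n‖ = 1) (hTv : Tendsto (fun n => T (v n)) atTop (𝓝 0)) (α : 𝕜) :
    ‖α • 1 + T‖ = max ‖α‖ ‖T‖ := by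
  have hα : ‖α • (1 : E →L[𝕜] E)‖ ≤ ‖α‖ :=
    (norm_smul_le α _).trans (mul_le_of_le_one_right (norm_nonneg α) (norm_id_le))
  have hle : ‖α‖ ≤ ‖α • 1 + T‖ := by
    rcases eq_or_ne α 0 with rfl | hα0
    · simp
    have hpos : ‖(0 : E)‖ < ‖α‖ := by rwa [norm_zero, norm_pos_iff]
    obtain ⟨n, hn⟩ := (hTv.norm.eventually_lt_const hpos).exists
    exact norm_le_norm_smul_one_add (hv n) hn
  refine le_antisymm ((IsUltrametricDist.norm_add_le_max _ _).trans (max_le_max hα le_rfl))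
    (max_le hle ?_)
  calc ‖T‖ = ‖(α • 1 + T) + -(α • 1)‖ := by rw [add_neg_cancel_comm]
    _ ≤ max ‖α • 1 + T‖ ‖α • (1 : E →L[𝕜] E)‖ := by
      rw [← norm_neg (α • _)]
      exact IsUltrametricDist.norm_add_le_max _ _
    _ = ‖α • 1 + T‖ := max_eq_left (hα.trans hle)

end OperatorNorm

section SequenceSpace

variable {K : Type} [NontriviallyNormedField K]

theorem norm_e (i : ℕ) : ‖e K i‖ = 1 := by
  rw [← ZeroAtInftyContinuousMap.norm_toBCF_eq_norm]
  refine le_antisymm ((BoundedContinuousFunction.norm_le zero_le_one).mpr fun j => ?_) ?_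
  · by_cases h : j = i <;> simp [e, h]
  · simpa [e] using (e K i).toBCF.norm_coe_le_norm i

theorem pr_e_left (n : ℕ) (x : Cz K) : pr (e K n) x = x n := by
  rw [pr, tsum_eq_single n fun j hj => by simp [e, hj]]
  simp [e]

end SequenceSpace

theorem ZeroAtInftyContinuousMap.tendsto_atTop {β : Type*} [TopologicalSpace β] [Zero β]
    (f : ZeroAtInftyContinuousMap ℕ β) : Tendsto f atTop (𝓝 0) := by
  simpa [cocompact_eq_atTop] using zero_at_infty f

theorem stmt11_general {K : Type} [NontriviallyNormedField K]
    (hna : IsNonarchimedean (norm : K → ℝ))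
    (y : ℕ → Cz K)
    (P : ℕ → (Cz K →L[K] Cz K))
    (hP : ∀ i x, P i x = (pr x (y i) / pr (y i) (y i)) • y i)
    (α : K) (lam : Cz K) (hsum : Summable (fun i => lam i • P i)) :
    ‖α • (1 : Cz K →L[K] Cz K) + (∑' i, lam i • P i)‖ =
      max ‖α‖ ‖(∑' i, lam i • P i : Cz K →L[K] Cz K)‖ := by
  have := IsUltrametricDist.isUltrametricDist_of_isNonarchimedean_norm hna
  refine ContinuousLinearMap.norm_smul_one_add_eq_max norm_e ?_ α
  have hPe (i : ℕ) : Tendsto (fun n => P i (e K n)) atTop (𝓝 0) := by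
    simpa [hP, pr_e_left] using ((y i).tendsto_atTop.div_const _).smul_const (y i)
  refine ContinuousLinearMap.tendsto_apply_of_tendsto hsum.hasSum (fun n => (norm_e n).le)
    fun s => ?_
  simpa using tendsto_finsetSum s fun i _ => (hPe i).const_smul (lam i)

theorem stmt11 {K : Type} [NontriviallyNormedField K] [CompleteSpace K]
    (hna : IsNonarchimedean (norm : K → ℝ))
    (hres : FormallyRealRing (Residue hna))
    (y : ℕ → Cz K) (hy : ∀ i j, i ≠ j → pr (y i) (y j) = 0) (hy1 : ∀ i, ‖y i‖ = 1)
    (P : ℕ → (Cz K →L[K] Cz K))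
    (hP : ∀ i x, P i x = (pr x (y i) / pr (y i) (y i)) • y i)
    (α : K) (lam : Cz K) (hsum : Summable (fun i => lam i • P i)) :
    ‖α • (1 : Cz K →L[K] Cz K) + (∑' i, lam i • P i)‖ =
      max ‖α‖ ‖(∑' i, lam i • P i : Cz K →L[K] Cz K)‖ :=
  stmt11_general hna y P hP α lam hsum
end
end

section
/- Every nonzero continuous K-algebra homomorphism φ : 𝒮_Y(c₀) → K is either φ_n for some n ∈ ℕ (determined by φ_n(αId + T_λ) = α + λ_n) or φ₀ (determined by φ₀(αId + T_λ) = α). Consequently the spectrum Sp(𝒮_Y(c₀)) is in bijection with ℕ ∪ {0}, and 𝒮_Y(c₀) is isometrically isomorphic to C(ℕ*, K), the continuous K-valued functions on the one-point compactification ℕ* of the discrete space ℕ, via the Gelfand transform (αId + T_λ) ↦ (n ↦ α + λ_n, ∞ ↦ α). -/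
open Filter Topology

noncomputable section

/-!
A character `f` of the unitization satisfies `f 1 0 = 1`, hence `f a μ = a + g μ` for a continuous
multiplicative linear form `g` on `c₀`. The `g (e K i)` are idempotents, pairwise orthogonal, so at
most one of them is `1`, and `μ = ∑ μ i • e K i` forces `g = 0` or `g = eval n`.

For the isometry, `T = a • 1 + ∑ μ i • P i` acts on `y n` as `a + μ n`, which bounds `‖T‖` from
below by the sup norm of the Gelfand transform; the ultrametric inequality bounds it from above,
once each `P i` has norm `≤ 1`, i.e. once `‖⟨y, y⟩‖ = ‖y‖²`. The latter is where the formally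
real residue field enters: after scaling so that the largest coordinate is `1`, a sum of squares
of norm `< 1` would reduce to `0` in the residue field, making `-1` a sum of squares there.
-/

open scoped ZeroAtInfty

namespace ZeroAtInftyContinuousMap

variable {α β : Type*} [TopologicalSpace α] [SeminormedAddCommGroup β]

theorem norm_coe_le_norm (f : C₀(α, β)) (x : α) : ‖f x‖ ≤ ‖f‖ := by
  rw [← norm_toBCF_eq_norm]
  exact f.toBCF.norm_coe_le_norm x

theorem norm_le {f : C₀(α, β)} {C : ℝ} (hC : 0 ≤ C) : ‖f‖ ≤ C ↔ ∀ x, ‖f x‖ ≤ C := by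
  rw [← norm_toBCF_eq_norm]
  exact BoundedContinuousFunction.norm_le hC

instance [IsUltrametricDist β] : IsUltrametricDist C₀(α, β) :=
  IsUltrametricDist.isUltrametricDist_of_isNonarchimedean_norm fun f g =>
    (norm_le (le_max_of_le_left (norm_nonneg f))).2 fun x =>
      (IsUltrametricDist.norm_add_le_max (f x) (g x)).trans
        (max_le_max (f.norm_coe_le_norm x) (g.norm_coe_le_norm x))

theorem exists_norm_apply_eq_norm [Nonempty α] (f : C₀(α, β)) : ∃ x, ‖f x‖ = ‖f‖ := by
  obtain ⟨m, hm⟩ : ∃ m, ∀ x, ‖f x‖ ≤ ‖f m‖ := by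
    by_cases hzero : ∀ x, ‖f x‖ = 0
    · exact ⟨Classical.arbitrary α, fun x => by simp [hzero]⟩
    obtain ⟨x₀, hx₀⟩ := not_forall.1 hzero
    refine (map_continuous f).norm.exists_forall_ge' x₀ ?_
    exact (zero_at_infty f).norm.eventually
      (ge_mem_nhds (by simpa using (norm_nonneg _).lt_of_ne' hx₀))
  exact ⟨m, le_antisymm (f.norm_coe_le_norm m) ((norm_le (norm_nonneg _)).2 hm)⟩

theorem tendsto_cofinite [DiscreteTopology α] (f : C₀(α, β)) : Tendsto f cofinite (𝓝 0) := by
  simpa only [cocompact_eq_cofinite] using zero_at_infty f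

end ZeroAtInftyContinuousMap

variable {K : Type} [NontriviallyNormedField K]

theorem e_mul_self (i : ℕ) : e K i * e K i = e K i := by
  ext j
  by_cases h : j = i <;> simp [e, h]

theorem e_mul_of_ne {i j : ℕ} (h : i ≠ j) : e K i * e K j = 0 := by
  ext n
  by_cases hn : n = i
  · simp [e, hn, h]
  · simp [e, hn]

theorem sum_smul_e_apply (μ : Cz K) (t : Finset ℕ) (j : ℕ) :
    (∑ i ∈ t, μ i • e K i) j = if j ∈ t then μ j else 0 := by
  change AddMonoidHom.mk' (fun f : Cz K => f j) (fun _ _ => rfl) _ = _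
  rw [map_sum, ← Finset.sum_ite_eq' t j μ]
  simp [e]

theorem hasSum_smul_e (μ : Cz K) : HasSum (fun i => μ i • e K i) μ := by
  rw [HasSum, Metric.tendsto_nhds]
  intro ε hε
  have hlarge : {j | ε / 2 ≤ ‖μ j‖}.Finite := by
    simpa [eventually_cofinite] using
      μ.tendsto_cofinite.norm.eventually (gt_mem_nhds (show ‖(0 : K)‖ < ε / 2 by simpa))
  filter_upwards [eventually_ge_atTop hlarge.toFinset] with t ht
  rw [dist_eq_norm]
  refine ((ZeroAtInftyContinuousMap.norm_le (half_pos hε).le).2 fun j => ?_).trans_lt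
    (half_lt_self hε)
  by_cases hj : j ∈ t
  · simpa [sum_smul_e_apply, hj] using (half_pos hε).le
  · have hsmall : ‖μ j‖ < ε / 2 := by simpa using fun h : j ∈ hlarge.toFinset => hj (ht h)
    simpa [sum_smul_e_apply, hj] using hsmall.le

theorem eq_zero_or_exists_eq_apply (g : Cz K →ₗ[K] K) (hg : Continuous g)
    (hmul : ∀ μ ν, g (μ * ν) = g μ * g ν) : g = 0 ∨ ∃ n, ∀ μ, g μ = μ n := by
  have hsum (μ : Cz K) : HasSum (fun i => μ i * g (e K i)) (g μ) := by
    simpa only [Function.comp_def, map_smul, smul_eq_mul] using (hasSum_smul_e μ).map g hg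
  by_cases hvanish : ∀ i, g (e K i) = 0
  · left
    refine LinearMap.ext fun μ => (hsum μ).unique ?_
    simpa only [hvanish, mul_zero, LinearMap.zero_apply] using hasSum_zero
  · right
    obtain ⟨n, hn⟩ := not_forall.1 hvanish
    have hgn : g (e K n) = 1 :=
      (IsIdempotentElem.iff_eq_zero_or_one.1
        (by rw [IsIdempotentElem, ← hmul, e_mul_self])).resolve_left hn
    have hother (i : ℕ) (hi : i ≠ n) : g (e K i) = 0 := by
      simpa [e_mul_of_ne hi, hgn] using (hmul (e K i) (e K n)).symm
    refine ⟨n, fun μ => (hsum μ).unique ?_⟩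
    simpa only [hgn, mul_one] using
      hasSum_single (f := fun i => μ i * g (e K i)) n fun i hi => by rw [hother i hi, mul_zero]

theorem eq_const_or_exists_eq_add_apply (f : K → Cz K → K)
    (hcont : Continuous fun p : K × Cz K => f p.1 p.2)
    (hadd : ∀ (a b : K) (μ ν : Cz K), f (a + b) (μ + ν) = f a μ + f b ν)
    (hsmul : ∀ (c a : K) (μ : Cz K), f (c * a) (c • μ) = c * f a μ)
    (hmul : ∀ (a b : K) (μ ν : Cz K), f (a * b) (a • ν + b • μ + μ * ν) = f a μ * f b ν)
    (hne : f ≠ fun _ _ => 0) :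
    (∀ (a : K) (μ : Cz K), f a μ = a) ∨ ∃ n : ℕ, ∀ (a : K) (μ : Cz K), f a μ = a + μ n := by
  have hunit : f 1 0 = 1 := by
    refine (IsIdempotentElem.iff_eq_zero_or_one.1
      (show f 1 0 * f 1 0 = f 1 0 by simpa using (hmul 1 1 0 0).symm)).resolve_left
      fun h0 => hne ?_
    funext b ν
    simpa [h0] using hmul 1 b 0 ν
  have hsplit (a : K) (μ : Cz K) : f a μ = a + f 0 μ := by
    have ha : f a 0 = a := by simpa [hunit] using hsmul a 1 0
    simpa [ha] using hadd a 0 0 μ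
  let g : Cz K →ₗ[K] K :=
    { toFun := f 0
      map_add' := fun μ ν => by simpa using hadd 0 0 μ ν
      map_smul' := fun c μ => by simpa using hsmul c 0 μ }
  have hg : Continuous g := hcont.comp (continuous_const.prodMk continuous_id)
  rcases eq_zero_or_exists_eq_apply g hg (fun μ ν => by simpa [g] using hmul 0 0 μ ν)
    with hzero | ⟨n, hn⟩
  · exact Or.inl fun a μ => by
      rw [hsplit, show f 0 μ = 0 from LinearMap.congr_fun hzero μ, add_zero]
  · exact Or.inr ⟨n, fun a μ => by rw [hsplit, ← hn μ]; rfl⟩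

theorem FormallyRealRing.sum_sq_ne_neg_one {R : Type} [CommRing R] (hR : FormallyRealRing R)
    {ι : Type*} (s : Finset ι) (f : ι → R) : ∑ i ∈ s, f i ^ 2 ≠ -1 := fun h =>
  hR ⟨s.card, fun j => f (s.equivFin.symm j), by
    rw [← h, ← Finset.sum_coe_sort s]
    exact Equiv.sum_comp s.equivFin.symm fun i => f i ^ 2⟩

theorem FormallyRealRing.sum_sq_ne_zero {R : Type} [CommRing R] (hR : FormallyRealRing R)
    {ι : Type*} (s : Finset ι) (f : ι → R) {m : ι} (hm : m ∈ s) (hfm : f m = 1) :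
    ∑ i ∈ s, f i ^ 2 ≠ 0 := by
  classical
  rw [← Finset.add_sum_erase s _ hm, hfm, one_pow]
  exact fun h => hR.sum_sq_ne_neg_one (s.erase m) f (eq_neg_of_add_eq_zero_right h)

theorem norm_coe_sum_sq_eq_one (hna : IsNonarchimedean (norm : K → ℝ))
    (hres : FormallyRealRing (Residue hna)) {ι : Type*} [Fintype ι] (z : ι → valRing hna)
    {m : ι} (hm : z m = 1) : ‖((∑ i, z i ^ 2 : valRing hna) : K)‖ = 1 := by
  refine le_antisymm (∑ i, z i ^ 2).2 (not_lt.1 fun hlt => ?_)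
  have hres0 := (Ideal.Quotient.eq_zero_iff_mem (I := valIdeal hna)).2 hlt
  rw [map_sum] at hres0
  simp only [map_pow] at hres0
  exact hres.sum_sq_ne_zero _ _ (Finset.mem_univ m) (by rw [hm, map_one]) hres0

theorem norm_sum_sq_eq_sq_of_forall_norm_le (hna : IsNonarchimedean (norm : K → ℝ))
    (hres : FormallyRealRing (Residue hna)) {ι : Type*} (s : Finset ι) (a : ι → K) {m : ι}
    (hm : m ∈ s) (hle : ∀ i ∈ s, ‖a i‖ ≤ ‖a m‖) : ‖∑ i ∈ s, a i ^ 2‖ = ‖a m‖ ^ 2 := by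
  by_cases ham : a m = 0
  · have hzero (i : ι) (hi : i ∈ s) : a i = 0 := norm_le_zero_iff.1 (by simpa [ham] using hle i hi)
    simpa [ham] using Finset.sum_eq_zero fun i hi => by simp [hzero i hi]
  let z : s → valRing hna := fun i => ⟨a i / a m, by
    change ‖a i / a m‖ ≤ 1
    rw [norm_div, div_le_one (norm_pos_iff.2 ham)]
    exact hle i i.2⟩
  have hz : ∑ i ∈ s, a i ^ 2 = a m ^ 2 * ((∑ i, z i ^ 2 : valRing hna) : K) := by
    push_cast
    rw [Finset.mul_sum, ← Finset.sum_coe_sort s]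
    refine Finset.sum_congr rfl fun i _ => ?_
    simp only [z]
    field_simp
  rw [hz, norm_mul, norm_pow, norm_coe_sum_sq_eq_one hna hres z (m := ⟨m, hm⟩)
    (Subtype.ext (div_self ham)), mul_one]

section Ultrametric

variable [IsUltrametricDist K]

theorem norm_pr_le (x y : Cz K) : ‖pr x y‖ ≤ ‖x‖ * ‖y‖ :=
  IsUltrametricDist.norm_tsum_le_of_forall_le_of_nonneg (by positivity) fun i => by
    rw [norm_mul]
    exact mul_le_mul (x.norm_coe_le_norm i) (y.norm_coe_le_norm i) (norm_nonneg _) (norm_nonneg _)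

theorem summable_mul_apply [CompleteSpace K] (x y : Cz K) : Summable fun i => x i * y i :=
  NonarchimedeanAddGroup.summable_of_tendsto_cofinite_zero <| by
    simpa using x.tendsto_cofinite.mul y.tendsto_cofinite

end Ultrametric

theorem norm_pr_self [CompleteSpace K] (hna : IsNonarchimedean (norm : K → ℝ))
    (hres : FormallyRealRing (Residue hna)) (x : Cz K) : ‖pr x x‖ = ‖x‖ ^ 2 := by
  have := IsUltrametricDist.isUltrametricDist_of_isNonarchimedean_norm hna
  obtain ⟨m, hm⟩ := x.exists_norm_apply_eq_norm
  have hpartial : Tendsto (fun N => ‖∑ i ∈ Finset.range N, x i ^ 2‖) atTop (𝓝 ‖pr x x‖) := by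
    simpa only [sq, pr] using ((summable_mul_apply x x).hasSum.tendsto_sum_nat).norm
  refine tendsto_nhds_unique hpartial (tendsto_const_nhds.congr' ?_)
  filter_upwards [eventually_gt_atTop m] with N hN
  rw [← hm, norm_sum_sq_eq_sq_of_forall_norm_le hna hres _ x (Finset.mem_range.2 hN)
    fun i _ => hm ▸ x.norm_coe_le_norm i]

def gelfand (a : K) (μ : Cz K) : C(OnePoint ℕ, K) :=
  OnePoint.continuousMapMkDiscrete (fun n => a + μ n) a <| by
    simpa using tendsto_const_nhds.add μ.tendsto_cofinite

@[simp]
theorem gelfand_infty (a : K) (μ : Cz K) : gelfand a μ OnePoint.infty = a := rfl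

@[simp]
theorem gelfand_coe (a : K) (μ : Cz K) (n : ℕ) : gelfand a μ n = a + μ n := rfl

theorem exists_eq_gelfand (h : C(OnePoint ℕ, K)) : ∃ a μ, h = gelfand a μ := by
  have hlim : Tendsto (fun n : ℕ => h n - h OnePoint.infty) (cocompact ℕ) (𝓝 0) := by
    rw [cocompact_eq_cofinite, ← sub_self (h OnePoint.infty)]
    exact ((OnePoint.continuous_iff_from_discrete h).1 h.continuous).sub_const _
  refine ⟨h OnePoint.infty, ⟨⟨fun n => h n - h OnePoint.infty, continuous_of_discreteTopology⟩,
    hlim⟩, ContinuousMap.ext fun p => ?_⟩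
  induction p using OnePoint.rec with
  | infty => rfl
  | coe n => simp

theorem norm_gelfand_le_iff {a : K} {μ : Cz K} {C : ℝ} (hC : 0 ≤ C) :
    ‖gelfand a μ‖ ≤ C ↔ ‖a‖ ≤ C ∧ ∀ n, ‖a + μ n‖ ≤ C := by
  simp [ContinuousMap.norm_le _ hC, OnePoint.forall]

theorem norm_apply_le_norm_gelfand [IsUltrametricDist K] (a : K) (μ : Cz K) (n : ℕ) :
    ‖μ n‖ ≤ ‖gelfand a μ‖ := by
  have hbound := (norm_gelfand_le_iff (a := a) (μ := μ) (norm_nonneg _)).1 le_rfl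
  calc ‖μ n‖ = ‖(a + μ n) + -a‖ := by rw [add_neg_cancel_comm]
    _ ≤ max ‖a + μ n‖ ‖-a‖ := IsUltrametricDist.norm_add_le_max _ _
    _ ≤ ‖gelfand a μ‖ := max_le (hbound.2 n) (by simpa using hbound.1)

section Projection

variable {P : Cz K →L[K] Cz K} {y : Cz K} (hP : ∀ x, P x = (pr x y / pr y y) • y)
include hP

theorem proj_apply_self (hy : pr y y ≠ 0) : P y = y := by
  rw [hP, div_self hy, one_smul]

theorem proj_apply_of_pr_eq_zero {x : Cz K} (hx : pr x y = 0) : P x = 0 := by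
  rw [hP, hx, zero_div, zero_smul]

theorem norm_proj_apply_le [IsUltrametricDist K] (hy : ‖pr y y‖ = 1) (hy1 : ‖y‖ = 1) (x : Cz K) :
    ‖P x‖ ≤ ‖x‖ := by
  simpa [hP, norm_smul, hy, hy1] using norm_pr_le x y

end Projection

theorem opNorm_eq_norm_gelfand [IsUltrametricDist K] (y : ℕ → Cz K)
    (hy : ∀ i j, i ≠ j → pr (y i) (y j) = 0) (hy1 : ∀ i, ‖y i‖ = 1)
    (hyy : ∀ i, ‖pr (y i) (y i)‖ = 1) (P : ℕ → (Cz K →L[K] Cz K))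
    (hP : ∀ i x, P i x = (pr x (y i) / pr (y i) (y i)) • y i) (a : K) (μ : Cz K)
    (hsum : Summable fun i => μ i • P i) :
    ‖a • (1 : Cz K →L[K] Cz K) + ∑' i, μ i • P i‖ = ‖gelfand a μ‖ := by
  set T := a • (1 : Cz K →L[K] Cz K) + ∑' i, μ i • P i
  have hT (x : Cz K) : T x = a • x + ∑' i, μ i • P i x := by
    rw [add_apply, smul_apply, one_apply_eq_self]
    exact congrArg _ ((ContinuousLinearMap.apply K (Cz K) x).map_tsum hsum)
  have hTy (n : ℕ) : T (y n) = (a + μ n) • y n := by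
    rw [hT, tsum_eq_single n fun i hi =>
      by rw [proj_apply_of_pr_eq_zero (hP i) (hy n i hi.symm), smul_zero],
      proj_apply_self (hP n) (norm_ne_zero_iff.1 (by simp [hyy n]))]
    exact (add_smul a (μ n) (y n)).symm
  have hcoeff (n : ℕ) : ‖a + μ n‖ ≤ ‖T‖ := by
    simpa [hTy, norm_smul, hy1] using T.le_opNorm (y n)
  have hconst : ‖a‖ ≤ ‖T‖ := by
    refine le_of_tendsto (x := cofinite) ?_ (Eventually.of_forall hcoeff)
    simpa using (tendsto_const_nhds.add μ.tendsto_cofinite).norm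
  refine le_antisymm (T.opNorm_le_bound (norm_nonneg _) fun x => ?_)
    ((norm_gelfand_le_iff (norm_nonneg T)).2 ⟨hconst, hcoeff⟩)
  rw [hT]
  refine (IsUltrametricDist.norm_add_le_max _ _).trans (max_le ?_ ?_)
  · rw [norm_smul]
    gcongr
    simpa using (gelfand a μ).norm_coe_le_norm OnePoint.infty
  · refine IsUltrametricDist.norm_tsum_le_of_forall_le_of_nonneg (by positivity) fun i => ?_
    rw [norm_smul]
    exact mul_le_mul (norm_apply_le_norm_gelfand a μ i)
      (norm_proj_apply_le (hP i) (hyy i) (hy1 i) x) (norm_nonneg _) (norm_nonneg _)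

theorem stmt14 {K : Type} [NontriviallyNormedField K] [CompleteSpace K]
    (hna : IsNonarchimedean (norm : K → ℝ))
    (hres : FormallyRealRing (Residue hna))
    (y : ℕ → Cz K) (hy : ∀ i j, i ≠ j → pr (y i) (y j) = 0) (hy1 : ∀ i, ‖y i‖ = 1)
    (P : ℕ → (Cz K →L[K] Cz K))
    (hP : ∀ i x, P i x = (pr x (y i) / pr (y i) (y i)) • y i)
    (hsum : ∀ lam : Cz K, Summable fun i => lam i • P i) :
    (∀ f : K → Cz K → K,
      Continuous (fun p : K × Cz K => f p.1 p.2) →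
      (∀ (a b : K) (mu nu : Cz K), f (a + b) (mu + nu) = f a mu + f b nu) →
      (∀ (c a : K) (mu : Cz K), f (c * a) (c • mu) = c * f a mu) →
      (∀ (a b : K) (mu nu : Cz K),
        f (a * b) (a • nu + b • mu + mu * nu) = f a mu * f b nu) →
      (f ≠ fun _ _ => 0) →
      (∀ (a : K) (mu : Cz K), f a mu = a) ∨
        (∃ n : ℕ, ∀ (a : K) (mu : Cz K), f a mu = a + mu n)) ∧
    (∀ (a : K) (mu : Cz K), ∃ h : C(OnePoint ℕ, K),
      h OnePoint.infty = a ∧ (∀ n : ℕ, h (n : OnePoint ℕ) = a + mu n) ∧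
      ‖h‖ = ‖a • (1 : Cz K →L[K] Cz K) + ∑' i, mu i • P i‖) ∧
    (∀ h : C(OnePoint ℕ, K), ∃ (a : K) (mu : Cz K),
      h OnePoint.infty = a ∧ ∀ n : ℕ, h (n : OnePoint ℕ) = a + mu n) := by
  have := IsUltrametricDist.isUltrametricDist_of_isNonarchimedean_norm hna
  have hyy (i : ℕ) : ‖pr (y i) (y i)‖ = 1 := by rw [norm_pr_self hna hres, hy1, one_pow]
  refine ⟨eq_const_or_exists_eq_add_apply, fun a mu => ⟨gelfand a mu, rfl, fun n => rfl,
    (opNorm_eq_norm_gelfand y hy hy1 hyy P hP a mu (hsum mu)).symm⟩, fun h => ?_⟩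
  obtain ⟨a, mu, rfl⟩ := exists_eq_gelfand h
  exact ⟨a, mu, rfl, fun n => rfl⟩
end
end
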